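/- For the TASEP with matrix-product stationary state, the normalisation Z̃_n = ⟨W|(D+E)^n|V⟩ with the DEHP algebra relations equals ∑_{p=0}^n B_{n,p} ∑_{q=0}^p α^{-q} β^{-(p-q)}, where B_{n,p} are Ballot numbers. -/

import Mathlib

/-!
Using `DE = D + E`, every word in `D` and `E` reduces to normal-ordered words `E^q D^r`.
With `N_p = ∑_{q+r=p} E^q D^r` one finds `N_p (D + E) = N_1 + ⋯ + N_{p+1}`, so the coefficients
of `(D + E)^n` on the `N_p` obey `c_{n+1,s+1} = ∑_{p ≥ s} c_{n,p}`. The ballot numbers satisfy the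
same recursion, because of the local rule `B_{m+1,q+1} = B_{m+1,q+2} + B_{m,q}`; hence
`(D + E)^n = ∑_p B_{n,p} N_p`, and `⟨W|E^q D^r|V⟩ = α^{-q} β^{-r}`.
-/

/-- Ballot number B_{m,q}, with B_{0,0} = 1 and B_{m,q} = 0 for q > m. -/
noncomputable def Bq (m q : ℕ) : ℝ :=
  if m = 0 then (if q = 0 then 1 else 0)
  else if q ≤ m then
    (q : ℝ) * (2 * m - q - 1).factorial / ((m.factorial : ℝ) * (m - q).factorial)
  else 0

section BallotNumbers

open Finset

lemma Bq_succ_zero (n : ℕ) : Bq (n + 1) 0 = 0 := by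
  simp [Bq]

lemma Bq_self (n : ℕ) : Bq n n = 1 := by
  rcases n with _ | n
  · simp [Bq]
  · have hfact : ((n + 1).factorial : ℝ) = (n + 1) * n.factorial := by
      push_cast [Nat.factorial_succ]; ring
    simp only [Bq, Nat.add_one_ne_zero, if_false, le_refl, if_true, Nat.sub_self,
      show 2 * (n + 1) - (n + 1) - 1 = n by omega, Nat.factorial_zero, Nat.cast_one, mul_one,
      hfact]
    have : (n.factorial : ℝ) ≠ 0 := by positivity
    push_cast
    field_simp

lemma Bq_succ_succ (m q : ℕ) (hqm : q < m) :
    Bq (m + 1) (q + 1) = Bq (m + 1) (q + 2) + Bq m q := by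
  obtain ⟨a, rfl⟩ : ∃ a, m = q + a + 1 := ⟨m - q - 1, by omega⟩
  simp only [Bq, show q + a + 1 + 1 ≠ 0 by omega, show q + a + 1 ≠ 0 by omega, if_false,
    show q + 1 ≤ q + a + 1 + 1 by omega, show q + 2 ≤ q + a + 1 + 1 by omega,
    show q ≤ q + a + 1 by omega, if_true,
    show 2 * (q + a + 1 + 1) - (q + 1) - 1 = (q + 2 * a + 1) + 1 by omega,
    show q + a + 1 + 1 - (q + 1) = a + 1 by omega,
    show 2 * (q + a + 1 + 1) - (q + 2) - 1 = q + 2 * a + 1 by omega,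
    show q + a + 1 + 1 - (q + 2) = a by omega,
    show 2 * (q + a + 1) - q - 1 = q + 2 * a + 1 by omega,
    show q + a + 1 - q = a + 1 by omega, Nat.factorial_succ]
  have h₁ : ((q + 2 * a + 1).factorial : ℝ) ≠ 0 := by positivity
  have h₂ : ((q + a + 1).factorial : ℝ) ≠ 0 := by positivity
  have h₃ : (a.factorial : ℝ) ≠ 0 := by positivity
  push_cast
  field_simp
  ring

lemma Bq_succ_succ_eq_sum_Icc {n t : ℕ} (htn : t ≤ n) :
    Bq (n + 1) (t + 1) = ∑ p ∈ Icc t n, Bq n p := by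
  induction htn using Nat.decreasingInduction with
  | self => simp [Bq_self]
  | of_succ t htn ih =>
    rw [Bq_succ_succ n t htn, ih, ← add_sum_Ioc_eq_sum_Icc htn.le, Icc_add_one_left_eq_Ioc,
      add_comm]

end BallotNumbers

section NormalOrdering

open Finset

variable {R : Type*} [Ring R] {D E : R}

def normalOrderedSum (D E : R) (p : ℕ) : R :=
  ∑ q ∈ range (p + 1), E ^ q * D ^ (p - q)

lemma normalOrderedSum_zero : normalOrderedSum D E 0 = 1 := by
  simp [normalOrderedSum]

lemma normalOrderedSum_succ (p : ℕ) :
    normalOrderedSum D E (p + 1) = D ^ (p + 1) + E * normalOrderedSum D E p := by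
  simp only [normalOrderedSum, sum_range_succ' _ (p + 1), mul_sum, ← mul_assoc, ← pow_succ',
    Nat.succ_sub_succ, pow_zero, one_mul, Nat.sub_zero]
  exact add_comm _ _

lemma pow_mul_eq_add_sum (hDE : D * E = D + E) (m : ℕ) :
    D ^ m * E = E + ∑ j ∈ range m, D ^ (j + 1) := by
  induction m with
  | zero => simp
  | succ m ih =>
    rw [pow_succ, mul_assoc, hDE, mul_add, ← pow_succ, sum_range_succ, ih]
    abel

lemma normalOrderedSum_mul_add (hDE : D * E = D + E) (p : ℕ) :
    normalOrderedSum D E p * (D + E) = ∑ s ∈ range (p + 1), normalOrderedSum D E (s + 1) := by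
  induction p with
  | zero =>
    simp [normalOrderedSum_zero, normalOrderedSum_succ]
  | succ p ih =>
    calc normalOrderedSum D E (p + 1) * (D + E)
        = D ^ (p + 2) + D ^ (p + 1) * E + E * (normalOrderedSum D E p * (D + E)) := by
          rw [normalOrderedSum_succ, add_mul, mul_add, pow_succ D (p + 1), mul_assoc]
      _ = ∑ s ∈ range (p + 2), D ^ (s + 1)
            + E * (normalOrderedSum D E 0 + ∑ s ∈ range (p + 1), normalOrderedSum D E (s + 1)) := by
          rw [pow_mul_eq_add_sum hDE, ih, normalOrderedSum_zero, mul_add, mul_one,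
            sum_range_succ _ (p + 1)]
          abel
      _ = ∑ s ∈ range (p + 2), normalOrderedSum D E (s + 1) := by
          rw [add_comm (normalOrderedSum D E 0), ← sum_range_succ', mul_sum, ← sum_add_distrib]
          simp only [normalOrderedSum_succ]

lemma add_pow_eq_sum_Bq_smul_normalOrderedSum [Algebra ℝ R] (hDE : D * E = D + E) (n : ℕ) :
    (D + E) ^ n = ∑ p ∈ range (n + 1), Bq n p • normalOrderedSum D E p := by
  induction n with
  | zero => simp [Bq, normalOrderedSum_zero]
  | succ n ih =>
    calc (D + E) ^ (n + 1)
        = ∑ p ∈ range (n + 1), ∑ s ∈ range (p + 1), Bq n p • normalOrderedSum D E (s + 1) := by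
          simp only [pow_succ, ih, sum_mul, smul_mul_assoc, normalOrderedSum_mul_add hDE, smul_sum]
      _ = ∑ s ∈ range (n + 1), ∑ p ∈ Icc s n, Bq n p • normalOrderedSum D E (s + 1) :=
          sum_comm' fun p s => by simp only [mem_range, mem_Icc]; omega
      _ = ∑ s ∈ range (n + 1), Bq (n + 1) (s + 1) • normalOrderedSum D E (s + 1) :=
          sum_congr rfl fun s hs => by
            rw [Bq_succ_succ_eq_sum_Icc (Nat.lt_succ_iff.mp (mem_range.mp hs)), sum_smul]
      _ = ∑ p ∈ range (n + 2), Bq (n + 1) p • normalOrderedSum D E p := by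
          rw [sum_range_succ' _ (n + 1), Bq_succ_zero, zero_smul, add_zero]

end NormalOrdering

namespace Module.End

variable {K V : Type*} [CommSemiring K] [AddCommMonoid V] [Module K V] {f : End K V}

lemma pow_apply_of_apply_eq_smul {v : V} {c : K} (h : f v = c • v) (m : ℕ) :
    (f ^ m) v = c ^ m • v := by
  induction m with
  | zero => simp
  | succ m ih => rw [pow_succ', mul_apply, ih, map_smul, h, smul_smul, pow_succ]

lemma map_pow_apply_of_map_apply_eq_mul {w : V →ₗ[K] K} {c : K} (h : ∀ u, w (f u) = c * w u)
    (m : ℕ) (u : V) : w ((f ^ m) u) = c ^ m * w u := by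
  induction m generalizing u with
  | zero => simp
  | succ m ih => rw [pow_succ', mul_apply, h, ih, pow_succ', mul_assoc]

end Module.End

theorem dehp_normalisation_general (V : Type*) [AddCommGroup V] [Module ℝ V]
    (D E : Module.End ℝ V) (v : V) (w : V →ₗ[ℝ] ℝ) (α β : ℝ)
    (hDE : D * E = D + E)
    (hDV : D v = β⁻¹ • v)
    (hWE : ∀ u : V, w (E u) = α⁻¹ * w u)
    (hWV : w v = 1) (n : ℕ) :
    w (((D + E) ^ n) v) =
      ∑ p ∈ Finset.range (n + 1), Bq n p *
        ∑ q ∈ Finset.range (p + 1), α⁻¹ ^ q * β⁻¹ ^ (p - q) := by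
  have hword (p q : ℕ) : w ((E ^ q * D ^ (p - q)) v) = α⁻¹ ^ q * β⁻¹ ^ (p - q) := by
    rw [Module.End.mul_apply, Module.End.pow_apply_of_apply_eq_smul hDV, map_smul, map_smul,
      Module.End.map_pow_apply_of_map_apply_eq_mul hWE, hWV, smul_eq_mul, mul_one, mul_comm]
  simp only [add_pow_eq_sum_Bq_smul_normalOrderedSum hDE, normalOrderedSum, LinearMap.sum_apply,
    LinearMap.smul_apply, map_sum, map_smul, smul_eq_mul, hword]

/-- The TASEP normalisation ⟨W|(D+E)ⁿ|V⟩, computed from the DEHP algebra relations,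
equals ∑_p B_{n,p} ∑_{q=0}^p α^{-q} β^{-(p-q)}. -/
theorem dehp_normalisation (V : Type*) [AddCommGroup V] [Module ℝ V]
    (D E : Module.End ℝ V) (v : V) (w : V →ₗ[ℝ] ℝ) (α β : ℝ)
    (hα : 0 < α) (hβ : 0 < β)
    (hDE : D * E = D + E)
    (hDV : D v = β⁻¹ • v)
    (hWE : ∀ u : V, w (E u) = α⁻¹ * w u)
    (hWV : w v = 1) (n : ℕ) :
    w (((D + E) ^ n) v) =
      ∑ p ∈ Finset.range (n + 1), Bq n p *
        ∑ q ∈ Finset.range (p + 1), α⁻¹ ^ q * β⁻¹ ^ (p - q) :=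
  dehp_normalisation_general V D E v w α β hDE hDV hWE hWV n
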